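/- arXiv:2306.07833 — 7 statements merged into one kernel-verified Lean document; each statement's English description precedes it below -/
import Mathlib

section
/- Let K be an algebraically closed field of characteristic p > 0. Let A(Y) = a_n Y^{p^n} + a_{n-1} Y^{p^{n-1}} + \cdots + a_1 Y^{p} + a_0 Y be an additive (p-)polynomial over K with n \geq 1, a_0 \neq 0 and a_n \neq 0, and let B(X) \in K[X] be a polynomial of degree m \geq 2 with p \nmid m. Then the bivariate polynomial A(Y) - B(X) is irreducible in K[X, Y]. -/
/-!
Give `X` the weight `deg f` and `Y` the weight `deg g`. The top weighted-homogeneous component of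
`f(Y) - g(X)` is the binomial `a Y ^ deg f - b X ^ deg g`, and top components are multiplicative,
so a nontrivial factorization of `f(Y) - g(X)` would factor that binomial. When `deg f` and
`deg g` are coprime the binomial is irreducible: one of the exponents is odd, and Kummer's
criterion over `K(Y)` applies because `c Y ^ t` has degree prime to that exponent. For
`A(Y) - B(X)` the degrees are `p ^ n` and `m`, coprime since `p ∤ m`.
-/

open MvPolynomial

theorem RatFunc.intDegree_pow {K : Type*} [Field K] {b : RatFunc K} (hb : b ≠ 0) (q : ℕ) :
    (b ^ q).intDegree = q * b.intDegree := by
  induction q with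
  | zero => simp
  | succ q ih =>
    rw [pow_succ, RatFunc.intDegree_mul (pow_ne_zero _ hb) hb, ih]
    push_cast
    ring

namespace Polynomial

theorem natDegree_sum_range_C_mul_X_pow {R : Type*} [Semiring R] {e : ℕ → ℕ}
    (he : StrictMono e) {a : ℕ → R} {n : ℕ} (ha : a n ≠ 0) :
    (∑ k ∈ Finset.range (n + 1), Polynomial.C (a k) * Polynomial.X ^ e k).natDegree = e n := by
  rw [Finset.sum_range_succ, natDegree_add_eq_right_of_degree_lt, natDegree_C_mul_X_pow _ _ ha]
  rw [degree_C_mul_X_pow _ ha]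
  refine (degree_sum_le _ _).trans_lt ((Finset.sup_lt_iff (WithBot.bot_lt_coe _)).mpr
    fun k hk => (degree_C_mul_X_pow_le _ _).trans_lt ?_)
  exact WithBot.coe_lt_coe.mpr (he (Finset.mem_range.mp hk))

theorem irreducible_X_pow_sub_C_C_mul_X_pow {K : Type*} [Field K] {s t : ℕ} {c : K}
    (hs : Odd s) (hst : s.Coprime t) (hc : c ≠ 0) :
    Irreducible (Polynomial.X ^ s - Polynomial.C (Polynomial.C c * Polynomial.X ^ t) :
      Polynomial (Polynomial K)) := by
  have hmonic := monic_X_pow_sub_C (Polynomial.C c * Polynomial.X ^ t) hs.pos.ne'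
  rw [hmonic.irreducible_iff_irreducible_map_fraction_map (K := RatFunc K), Polynomial.map_sub,
    Polynomial.map_pow, map_X, map_C]
  refine X_pow_sub_C_irreducible_of_odd hs fun q hq hqs b hb => ?_
  have hct : Polynomial.C c * Polynomial.X ^ t ≠ 0 :=
    mul_ne_zero (C_ne_zero.mpr hc) (pow_ne_zero _ X_ne_zero)
  have hb0 : b ≠ 0 := by
    rintro rfl
    rw [zero_pow hq.ne_zero] at hb
    exact RatFunc.algebraMap_ne_zero hct hb.symm
  have hdeg := congrArg RatFunc.intDegree hb
  rw [RatFunc.intDegree_pow hb0, RatFunc.intDegree_polynomial,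
    natDegree_C_mul_X_pow t c hc] at hdeg
  have hqt : q ∣ t := Int.natCast_dvd_natCast.mp ⟨b.intDegree, hdeg.symm⟩
  exact hq.one_lt.ne' (Nat.eq_one_of_dvd_coprimes hst hqs hqt)

end Polynomial

namespace MvPolynomial

section Binomial

variable {K : Type*} [Field K] {s t : ℕ}

theorem irreducible_X_zero_pow_sub_C_mul_X_one_pow {c : K} (hs : Odd s) (hst : s.Coprime t)
    (hc : c ≠ 0) : Irreducible ((X 0 : MvPolynomial (Fin 2) K) ^ s - C c * X 1 ^ t) := by
  let e : MvPolynomial (Fin 1) K ≃ₐ[K] Polynomial K := uniqueAlgEquiv K (Fin 1)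
  let E : MvPolynomial (Fin 2) K ≃+* Polynomial (Polynomial K) :=
    (finSuccEquiv K 1).toRingEquiv.trans (Polynomial.mapEquiv e.toRingEquiv)
  have hX0 : E (X 0) = Polynomial.X := by simp [E, e, finSuccEquiv_X_zero]
  have hX1 : E (X 1) = Polynomial.C Polynomial.X := by
    rw [← Fin.succ_zero_eq_one]
    simp only [E, e, RingEquiv.trans_apply, AlgEquiv.coe_ringEquiv, finSuccEquiv_X_succ,
      Polynomial.mapEquiv_apply, Polynomial.map_C]
    simp
  have hC : E (C c) = Polynomial.C (Polynomial.C c) := by simp [E, e, finSuccEquiv_apply]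
  rw [← MulEquiv.irreducible_iff E, map_sub, map_pow, map_mul, map_pow, hX0, hX1, hC,
    ← Polynomial.C_pow, ← Polynomial.C_mul]
  exact Polynomial.irreducible_X_pow_sub_C_C_mul_X_pow hs hst hc

theorem irreducible_C_mul_X_one_pow_sub_C_mul_X_zero_pow {a b : K} (ha : a ≠ 0) (hb : b ≠ 0)
    (hst : s.Coprime t) :
    Irreducible (C a * (X 1 : MvPolynomial (Fin 2) K) ^ s - C b * X 0 ^ t) := by
  rcases Nat.even_or_odd t with ht | ht
  · have hs : Odd s := Nat.coprime_two_right.mp (Nat.Coprime.coprime_dvd_right ht.two_dvd hst)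
    have hswap : C a * (X 1 : MvPolynomial (Fin 2) K) ^ s - C b * X 0 ^ t =
        C a * renameEquiv K (Equiv.swap 0 1) (X 0 ^ s - C (b / a) * X 1 ^ t) := by
      simp [mul_sub, ← mul_assoc, ← C_mul, mul_div_cancel₀ b ha]
    rw [hswap, irreducible_isUnit_mul (ha.isUnit.map C), MulEquiv.irreducible_iff]
    exact irreducible_X_zero_pow_sub_C_mul_X_one_pow hs hst (div_ne_zero hb ha)
  · have hneg : C a * (X 1 : MvPolynomial (Fin 2) K) ^ s - C b * X 0 ^ t =
        -C b * (X 0 ^ t - C (a / b) * X 1 ^ s) := by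
      rw [neg_mul, mul_sub, neg_sub, ← mul_assoc, ← C_mul, mul_div_cancel₀ a hb]
    rw [hneg, irreducible_isUnit_mul (hb.isUnit.map C).neg]
    exact irreducible_X_zero_pow_sub_C_mul_X_one_pow ht hst.symm (div_ne_zero ha hb)

end Binomial

section WeightedGrading

variable {σ R : Type*} [CommSemiring R] (w : σ → ℕ)

/-- `weightedGrading w f = ∑ d, f_d T ^ d` with `f_d` the `w`-weighted component of degree `d`
of `f`, so its leading coefficient is the top weighted-homogeneous component of `f`. -/
noncomputable def weightedGrading : MvPolynomial σ R →+* Polynomial (MvPolynomial σ R) :=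
  eval₂Hom (Polynomial.C.comp C) fun i => Polynomial.C (X i) * Polynomial.X ^ w i

@[simp]
theorem weightedGrading_C (r : R) :
    weightedGrading w (C r) = Polynomial.C (C r : MvPolynomial σ R) :=
  eval₂Hom_C _ _ _

@[simp]
theorem weightedGrading_X (i : σ) :
    weightedGrading w (X i : MvPolynomial σ R) = Polynomial.C (X i) * Polynomial.X ^ w i :=
  eval₂Hom_X' _ _ _

theorem eval_one_weightedGrading (f : MvPolynomial σ R) : (weightedGrading w f).eval 1 = f := by
  show (Polynomial.evalRingHom 1).comp (weightedGrading w) f = RingHom.id _ f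
  congr 1
  ext <;> simp

theorem map_constantCoeff_weightedGrading (f : MvPolynomial σ R) :
    (weightedGrading w f).map constantCoeff = Polynomial.C (constantCoeff f) := by
  show (Polynomial.mapRingHom constantCoeff).comp (weightedGrading w) f =
    Polynomial.C.comp constantCoeff f
  congr 1
  ext <;> simp

theorem isUnit_of_isUnit_leadingCoeff_weightedGrading [Nontrivial R] {f : MvPolynomial σ R}
    (h : IsUnit (weightedGrading w f).leadingCoeff) : IsUnit f := by
  have hdeg : (weightedGrading w f).natDegree = 0 := by
    by_contra hd
    have := congrArg (Polynomial.coeff · (weightedGrading w f).natDegree)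
      (map_constantCoeff_weightedGrading w f)
    simp only [Polynomial.coeff_map, Polynomial.coeff_C, if_neg hd] at this
    exact (h.map constantCoeff).ne_zero this
  rw [← eval_one_weightedGrading w f, Polynomial.eq_C_of_natDegree_eq_zero hdeg,
    Polynomial.eval_C]
  rwa [Polynomial.leadingCoeff, hdeg] at h

theorem irreducible_of_irreducible_leadingCoeff_weightedGrading [IsDomain R]
    {f : MvPolynomial σ R} (h : Irreducible (weightedGrading w f).leadingCoeff) :
    Irreducible f := by
  refine ⟨fun hf => h.not_isUnit ?_, fun g g' hf => ?_⟩
  · obtain ⟨r, hr, hrf⟩ := Polynomial.isUnit_iff.mp (hf.map (weightedGrading w))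
    rwa [← hrf, Polynomial.leadingCoeff_C]
  · rw [hf, map_mul, Polynomial.leadingCoeff_mul] at h
    exact (h.isUnit_or_isUnit rfl).imp (isUnit_of_isUnit_leadingCoeff_weightedGrading w)
      (isUnit_of_isUnit_leadingCoeff_weightedGrading w)

theorem weightedGrading_aeval_X (f : Polynomial R) (i : σ) :
    weightedGrading w (Polynomial.aeval (X i) f) =
      (f.map (C : R →+* MvPolynomial σ R)).comp (Polynomial.C (X i) * Polynomial.X ^ w i) := by
  rw [Polynomial.aeval_def, Polynomial.hom_eval₂, Polynomial.comp, Polynomial.eval₂_map,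
    weightedGrading_X]
  congr 1
  ext r
  simp [MvPolynomial.algebraMap_eq]

variable [IsDomain R] {w} {i : σ}

theorem natDegree_weightedGrading_aeval_X (f : Polynomial R) :
    (weightedGrading w (Polynomial.aeval (X i : MvPolynomial σ R) f)).natDegree =
      f.natDegree * w i := by
  rw [weightedGrading_aeval_X, Polynomial.natDegree_comp,
    Polynomial.natDegree_map_eq_of_injective (C_injective σ R),
    Polynomial.natDegree_C_mul_X_pow _ _ (X_ne_zero i)]

theorem leadingCoeff_weightedGrading_aeval_X (hw : w i ≠ 0) (f : Polynomial R) :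
    (weightedGrading w (Polynomial.aeval (X i : MvPolynomial σ R) f)).leadingCoeff =
      C f.leadingCoeff * X i ^ f.natDegree := by
  have hdeg : (Polynomial.C (X i : MvPolynomial σ R) * Polynomial.X ^ w i).natDegree ≠ 0 := by
    rwa [Polynomial.natDegree_C_mul_X_pow _ _ (X_ne_zero i)]
  rw [weightedGrading_aeval_X, Polynomial.leadingCoeff_comp hdeg,
    Polynomial.leadingCoeff_map_of_injective (C_injective σ R),
    Polynomial.natDegree_map_eq_of_injective (C_injective σ R),
    Polynomial.leadingCoeff_C_mul_X_pow]

end WeightedGrading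

theorem irreducible_aeval_X_one_sub_aeval_X_zero {K : Type*} [Field K] {f g : Polynomial K}
    (hf : f.natDegree ≠ 0) (hg : g.natDegree ≠ 0) (hfg : f.natDegree.Coprime g.natDegree) :
    Irreducible (Polynomial.aeval (X 1 : MvPolynomial (Fin 2) K) f - Polynomial.aeval (X 0) g) := by
  set w : Fin 2 → ℕ := ![f.natDegree, g.natDegree]
  set F := weightedGrading w (Polynomial.aeval (X 1 : MvPolynomial (Fin 2) K) f)
  set G := weightedGrading w (Polynomial.aeval (X 0 : MvPolynomial (Fin 2) K) g)
  have hlcf : f.leadingCoeff ≠ 0 := by simpa using Polynomial.ne_zero_of_natDegree_gt hf.bot_lt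
  have hlcg : g.leadingCoeff ≠ 0 := by simpa using Polynomial.ne_zero_of_natDegree_gt hg.bot_lt
  have hF : F.leadingCoeff = C f.leadingCoeff * X 1 ^ f.natDegree :=
    leadingCoeff_weightedGrading_aeval_X (w := w) (i := 1) hg f
  have hG : G.leadingCoeff = C g.leadingCoeff * X 0 ^ g.natDegree :=
    leadingCoeff_weightedGrading_aeval_X (w := w) (i := 0) hf g
  have hdeg : F.degree = G.degree := by
    have hF0 : F ≠ 0 := Polynomial.leadingCoeff_ne_zero.mp (by simp [hF, hlcf])
    have hG0 : G ≠ 0 := Polynomial.leadingCoeff_ne_zero.mp (by simp [hG, hlcg])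
    rw [Polynomial.degree_eq_natDegree hF0, Polynomial.degree_eq_natDegree hG0,
      natDegree_weightedGrading_aeval_X, natDegree_weightedGrading_aeval_X]
    simp [w, mul_comm]
  have hirr : Irreducible (F.leadingCoeff - G.leadingCoeff) := by
    rw [hF, hG]
    exact irreducible_C_mul_X_one_pow_sub_C_mul_X_zero_pow hlcf hlcg hfg
  apply irreducible_of_irreducible_leadingCoeff_weightedGrading w
  rwa [map_sub, Polynomial.leadingCoeff_sub_of_degree_eq hdeg (sub_ne_zero.mp hirr.ne_zero)]

end MvPolynomial

theorem additive_sub_separated_irreducible_general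
    {K : Type*} [Field K] (p : ℕ) [Fact p.Prime]
    (n : ℕ) (a : ℕ → K) (han : a n ≠ 0)
    (B : Polynomial K) (hpm : ¬ p ∣ B.natDegree) :
    Irreducible
      ((∑ k ∈ Finset.range (n + 1), C (a k) * (X 1 : MvPolynomial (Fin 2) K) ^ p ^ k)
        - Polynomial.aeval (X 0 : MvPolynomial (Fin 2) K) B) := by
  have hp : p.Prime := Fact.out
  set A : Polynomial K := ∑ k ∈ Finset.range (n + 1), Polynomial.C (a k) * Polynomial.X ^ p ^ k
  have hA : A.natDegree = p ^ n :=
    Polynomial.natDegree_sum_range_C_mul_X_pow (pow_right_strictMono₀ hp.one_lt) han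
  have hAY : Polynomial.aeval (X 1 : MvPolynomial (Fin 2) K) A =
      ∑ k ∈ Finset.range (n + 1), C (a k) * X 1 ^ p ^ k := by
    simp [A, map_sum, MvPolynomial.algebraMap_eq]
  rw [← hAY]
  refine irreducible_aeval_X_one_sub_aeval_X_zero (hA ▸ pow_ne_zero n hp.ne_zero)
    (fun h => hpm (h ▸ dvd_zero p)) ?_
  rw [hA]
  exact ((Nat.Prime.coprime_iff_not_dvd hp).mpr hpm).pow_left n

/-- Let K be an algebraically closed field of characteristic p > 0. Let
`A(Y) = aₙ Y^(pⁿ) + ⋯ + a₁ Y^p + a₀ Y` be an additive p-polynomial over K with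
n ≥ 1, a₀ ≠ 0, aₙ ≠ 0, and let B(X) ∈ K[X] with deg B = m ≥ 2 and p ∤ m.
Then A(Y) - B(X) is irreducible in K[X, Y]. -/
theorem additive_sub_separated_irreducible
    {K : Type*} [Field K] [IsAlgClosed K] (p : ℕ) [Fact p.Prime] [CharP K p]
    (n : ℕ) (hn : 1 ≤ n) (a : ℕ → K) (ha0 : a 0 ≠ 0) (han : a n ≠ 0)
    (B : Polynomial K) (hm : 2 ≤ B.natDegree) (hpm : ¬ p ∣ B.natDegree) :
    Irreducible
      ((∑ k ∈ Finset.range (n + 1), C (a k) * (X 1 : MvPolynomial (Fin 2) K) ^ p ^ k)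
        - Polynomial.aeval (X 0 : MvPolynomial (Fin 2) K) B) :=
  additive_sub_separated_irreducible_general p n a han B hpm
end

section
/- Let p be a prime, let q = p^n \geq 3 be a power of p, and let K be an algebraically closed field of characteristic p. Then the bivariate polynomial Y^q + Y - X^{q-1} is irreducible in K[X, Y]. -/
/-!
Viewing `K[X, Y]` as `R[X]` with `R = K[Y]`, the polynomial is `-(X^(q-1) - (Y^q + Y))`.
The prime `Y` of `R` divides the constant term `Y^q + Y` exactly once, so Eisenstein's
criterion at `(Y)` applies to the monic polynomial `X^(q-1) - (Y^q + Y)`.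
-/

section

open Polynomial

variable {R : Type*} [CommRing R] [IsDomain R]

theorem Prime.not_sq_dvd_pow_add_self {π : R} (hπ : Prime π) {q : ℕ} (hq : 2 ≤ q) :
    ¬ π ^ 2 ∣ π ^ q + π := by
  rw [(dvd_add_right (pow_dvd_pow π hq)).not, ← pow_one π, ← pow_mul, one_mul,
    pow_dvd_pow_iff hπ.ne_zero hπ.not_isUnit]
  omega

theorem Polynomial.irreducible_X_pow_sub_C_of_prime {π c : R} (hπ : Prime π) (hc : π ∣ c)
    (hc2 : ¬ π ^ 2 ∣ c) {m : ℕ} (hm : m ≠ 0) : Irreducible (X ^ m - C c : R[X]) := by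
  have hmonic := monic_X_pow_sub_C c hm
  have hP : (Ideal.span {π}).IsPrime := (Ideal.span_singleton_prime hπ.ne_zero).mpr hπ
  refine (hmonic.isEisensteinAt_of_mem_of_notMem hP.ne_top ?_ ?_).irreducible hP
    hmonic.isPrimitive (by rwa [natDegree_X_pow_sub_C, pos_iff_ne_zero])
  · intro i hi
    rw [natDegree_X_pow_sub_C] at hi
    rcases eq_or_ne i 0 with rfl | hi0
    · simpa [hm.symm, Ideal.mem_span_singleton] using hc
    · simp [coeff_X_pow, coeff_C, hi.ne, hi0]
  · simpa [hm.symm, Ideal.span_singleton_pow, Ideal.mem_span_singleton] using hc2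

end

open MvPolynomial

theorem artin_schreier_like_irreducible_general
    {K : Type*} [Field K] (q : ℕ) (h3 : 3 ≤ q) :
    Irreducible
      ((X 1 : MvPolynomial (Fin 2) K) ^ q + X 1 - (X 0 : MvPolynomial (Fin 2) K) ^ (q - 1)) := by
  have hImage : finSuccEquiv K 1 ((X 1 : MvPolynomial (Fin 2) K) ^ q + X 1 - X 0 ^ (q - 1)) =
      -(Polynomial.X ^ (q - 1) - Polynomial.C (X 0 ^ q + X 0)) := by
    rw [show (X 1 : MvPolynomial (Fin 2) K) = X (Fin.succ 0) from rfl]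
    simp only [map_sub, map_add, map_pow, finSuccEquiv_X_succ, finSuccEquiv_X_zero]
    ring
  have hY : Prime (X 0 : MvPolynomial (Fin 1) K) := X_prime
  have hEisenstein := Polynomial.irreducible_X_pow_sub_C_of_prime hY
    (dvd_add (dvd_pow_self _ (by omega)) dvd_rfl) (hY.not_sq_dvd_pow_add_self (q := q) (by omega))
    (by omega : q - 1 ≠ 0)
  rw [← MulEquiv.irreducible_iff (finSuccEquiv K 1).toMulEquiv]
  exact hImage ▸ (Associated.refl _).neg_right.irreducible hEisenstein

/-- Let p be a prime, q = pⁿ ≥ 3 a power of p, and K an algebraically closed field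
of characteristic p. Then Y^q + Y - X^(q-1) is irreducible in K[X, Y]. -/
theorem artin_schreier_like_irreducible
    {K : Type*} [Field K] [IsAlgClosed K] (p n q : ℕ) [Fact p.Prime] [CharP K p]
    (hq : q = p ^ n) (h3 : 3 ≤ q) :
    Irreducible
      ((X 1 : MvPolynomial (Fin 2) K) ^ q + X 1 - (X 0 : MvPolynomial (Fin 2) K) ^ (q - 1)) :=
  artin_schreier_like_irreducible_general q h3
end

section
/- Let q \geq 2 be an integer and let r be an integer with r \geq (q-1)(q-2) - 1. Then the number of pairs (i, j) of nonnegative integers with 0 \leq j \leq q-1 and i\,q + j\,(q-1) \leq r equals r + 1 - (q-1)(q-2)/2. -/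
/-!
Column `j < q` of the staircase holds the `i` with `i * q ≤ r - j * (q - 1)`, and there are
`(r - j * (q - 1)) / q + 1 = (r + j) / q - j + 1` of them: the bound on `r` is exactly what keeps
`r - j * (q - 1) ≥ -q`, so that this count is never negative. Summing over `j`, Hermite's identity
`∑ j < q, ⌊(r + j) / q⌋ = r` leaves `r - q (q - 1) / 2 + q = r + 1 - (q - 1) (q - 2) / 2`.
-/

open Finset

theorem Int.sum_range_add_one_add_ediv (q : ℕ) (hq : q ≠ 0) (r : ℤ) :
    ∑ j ∈ Finset.range q, (r + 1 + j) / q = ∑ j ∈ Finset.range q, (r + j) / q + 1 := by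
  have hshift := sum_range_succ' (fun j : ℕ => (r + j) / q) q
  rw [sum_range_succ] at hshift
  have hlast : (r + q) / q = r / q + 1 := by
    simpa using Int.add_mul_ediv_right r 1 (Int.natCast_ne_zero.mpr hq)
  simp only [Nat.cast_add, Nat.cast_one, Nat.cast_zero, add_zero, hlast] at hshift
  simp only [add_assoc, add_comm (1 : ℤ)]
  linarith

theorem Int.sum_range_add_ediv (q : ℕ) (hq : q ≠ 0) (r : ℤ) :
    ∑ j ∈ Finset.range q, (r + j) / q = r := by
  induction r using Int.induction_on with
  | zero =>
    refine sum_eq_zero fun j hj => ?_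
    rw [zero_add]
    exact Int.ediv_eq_zero_of_lt (Int.natCast_nonneg j) (by exact_mod_cast mem_range.mp hj)
  | succ k ih => rw [Int.sum_range_add_one_add_ediv q hq, ih]
  | pred k ih =>
    have := Int.sum_range_add_one_add_ediv q hq (-k - 1)
    rw [sub_add_cancel, ih] at this
    linarith

theorem Set.ncard_setOf_snd_lt_and_fst_lt (n : ℕ) (c : ℕ → ℕ) :
    {ij : ℕ × ℕ | ij.2 < n ∧ ij.1 < c ij.2}.ncard = ∑ j ∈ Finset.range n, c j := by
  let column (j : ℕ) : Finset (ℕ × ℕ) := (Finset.range (c j)).map (.sectL ℕ j)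
  have hunion :
      {ij : ℕ × ℕ | ij.2 < n ∧ ij.1 < c ij.2} = ↑((Finset.range n).biUnion column) := by
    ext ⟨i, j⟩
    simp [column, and_comm]
  have hdisj : ((Finset.range n : Finset ℕ) : Set ℕ).PairwiseDisjoint column := by
    intro j _ k _ hjk
    simp only [Function.onFun, column, Finset.disjoint_left, mem_map]
    rintro _ ⟨i, -, rfl⟩ ⟨i', -, hi'⟩
    exact hjk (Prod.ext_iff.mp hi').2.symm
  rw [hunion, Set.ncard_coe_finset, card_biUnion hdisj]
  simp [column]

theorem Int.lt_toNat_ediv_add_one_iff {a b : ℤ} (hb : 0 < b) (i : ℕ) :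
    i < (a / b + 1).toNat ↔ (i : ℤ) * b ≤ a := by
  rw [Int.lt_toNat, Int.lt_add_one_iff, Int.le_ediv_iff_mul_le hb]

theorem Int.sub_mul_sub_one_ediv (r j : ℤ) {q : ℤ} (hq : q ≠ 0) :
    (r - j * (q - 1)) / q = (r + j) / q - j := by
  rw [show r - j * (q - 1) = r + j + (-j) * q by ring, Int.add_mul_ediv_right _ _ hq]
  ring

/-- Let q ≥ 2 and r an integer with r ≥ (q-1)(q-2) - 1. The number of pairs
(i, j) of naturals with j ≤ q-1 and i·q + j·(q-1) ≤ r equals r + 1 - (q-1)(q-2)/2. -/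
theorem count_pairs_riemann_roch_range (q : ℕ) (hq : 2 ≤ q) (r : ℤ)
    (hr : ((q : ℤ) - 1) * ((q : ℤ) - 2) - 1 ≤ r) :
    ({ij : ℕ × ℕ | ij.2 ≤ q - 1 ∧ ((ij.1 : ℤ) * q + (ij.2 : ℤ) * ((q : ℤ) - 1) ≤ r)}.ncard : ℤ)
      = r + 1 - ((q : ℤ) - 1) * ((q : ℤ) - 2) / 2 := by
  have hq0 : (0 : ℤ) < q := by omega
  have hstaircase :
      {ij : ℕ × ℕ | ij.2 ≤ q - 1 ∧ ((ij.1 : ℤ) * q + (ij.2 : ℤ) * ((q : ℤ) - 1) ≤ r)} =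
        {ij : ℕ × ℕ | ij.2 < q ∧ ij.1 < ((r - ij.2 * (q - 1)) / q + 1).toNat} := by
    ext ⟨i, j⟩
    simp only [Set.mem_ofPred_eq, Int.lt_toNat_ediv_add_one_iff hq0]
    omega
  have hcolumn (j : ℕ) (hj : j ∈ range q) :
      (((r - j * (q - 1)) / q + 1).toNat : ℤ) = (r + j) / q - j + 1 := by
    have hj : (j : ℤ) ≤ q - 1 := by have := mem_range.mp hj; omega
    have hnonneg : -1 ≤ (r - j * (q - 1)) / q :=
      (Int.le_ediv_iff_mul_le hq0).mpr (by nlinarith)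
    rw [Int.toNat_of_nonneg (by omega), Int.sub_mul_sub_one_ediv _ _ hq0.ne']
  have hgauss : (∑ j ∈ range q, (j : ℤ)) * 2 = q * (q - 1) := by
    have := sum_range_id_mul_two q
    zify [(by omega : 1 ≤ q)] at this
    exact this
  have hgenus : ((q : ℤ) - 1) * (q - 2) = 2 * (∑ j ∈ range q, (j : ℤ) - q + 1) := by
    linarith
  rw [hstaircase, Set.ncard_setOf_snd_lt_and_fst_lt q fun j => ((r - j * (q - 1)) / q + 1).toNat,
    Nat.cast_sum, sum_congr rfl hcolumn, sum_add_distrib, sum_sub_distrib,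
    Int.sum_range_add_ediv q (by omega), hgenus, Int.mul_ediv_cancel_left _ two_ne_zero]
  simp only [sum_const, card_range, nsmul_eq_mul, mul_one]
  ring
end

section
/- Let p be a prime and q = p^n \geq 3 a power of p, and let \mathbb{F}_{q^2} be the finite field with q^2 elements. Then the number of pairs (a, b) \in \mathbb{F}_{q^2} \times \mathbb{F}_{q^2} satisfying b^q + b = a^{q-1} equals q\,\bigl(1 + (q-1)\gcd(q-1, q+1)\bigr). -/
/-!
For `F = 𝔽_{q²}` the map `T b = b ^ q + b` is additive with image in `𝔽_q = {x | x ^ q = x}`.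
Both `ker T` and `𝔽_q` are root sets of polynomials of degree `q`, while `|ker T| · |im T| = q²`,
so `T` maps onto `𝔽_q` with every fibre of size `q`. The count is therefore
`q · #{a | a ^ (q - 1) ∈ 𝔽_q}`, and `a ^ (q - 1) ∈ 𝔽_q` iff `a = 0` or `a ^ (q - 1)² = 1`; in the
cyclic group `Fˣ` of order `q² - 1` the latter has `gcd(q² - 1, (q - 1)²) = (q - 1) gcd(q - 1, q + 1)`
solutions.
-/

open Polynomial

section RootCounts

variable {F : Type*} [Field F]

theorem ncard_setOf_pow_eq_mul_le {q : ℕ} (hq : 1 < q) (c : F) :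
    {x : F | x ^ q = c * x}.ncard ≤ q := by
  classical
  set f : F[X] := X ^ q - C c * X with hf
  have hdeg : f.natDegree = q := by
    rw [hf]; compute_degree! <;> simp [hq.ne', hq.le]
  have hf0 : f ≠ 0 := by
    rintro h; rw [h, natDegree_zero] at hdeg; omega
  have hsub : {x : F | x ^ q = c * x} ⊆ ↑f.roots.toFinset := by
    intro x hx
    rw [Finset.mem_coe, Multiset.mem_toFinset, mem_roots hf0]
    simpa [hf, sub_eq_zero] using hx
  calc {x : F | x ^ q = c * x}.ncard ≤ f.roots.toFinset.card :=
        (Set.ncard_le_ncard hsub (Finset.finite_toSet _)).trans_eq (Set.ncard_coe_finset _)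
    _ ≤ Multiset.card f.roots := Multiset.toFinset_card_le _
    _ ≤ q := hdeg ▸ card_roots' f

theorem ncard_setOf_pow_eq_one [Finite F] {m : ℕ} (hm : m ≠ 0) :
    {a : F | a ^ m = 1}.ncard = (Nat.card F - 1).gcd m := by
  have hset : {a : F | a ^ m = 1} = Units.val '' ((powMonoidHom m : Fˣ →* Fˣ).ker : Set Fˣ) := by
    ext a
    constructor
    · intro ha
      have ha0 : a ≠ 0 := by rintro rfl; simp [zero_pow hm] at ha
      exact ⟨Units.mk0 a ha0, by ext; simpa using ha, rfl⟩
    · rintro ⟨u, hu, rfl⟩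
      simpa using congrArg Units.val (show u ^ m = 1 from hu)
  rw [hset, Set.ncard_image_of_injective _ Units.val_injective, ← Nat.card_coe_set_eq,
    SetLike.coe_sort_coe, IsCyclic.card_powMonoidHom_ker, Nat.card_units]

end RootCounts

theorem pow_pow_succ_eq_self_iff {G₀ : Type*} [GroupWithZero G₀] (a : G₀) (k : ℕ) :
    (a ^ k) ^ (k + 1) = a ^ k ↔ a = 0 ∨ a ^ (k * k) = 1 := by
  rcases eq_or_ne a 0 with rfl | ha
  · cases k <;> simp
  rw [pow_succ, ← pow_mul, mul_eq_right₀ (pow_ne_zero k ha)]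
  simp [ha]

theorem ncard_setOf_pow_pow_succ_eq_self {F : Type*} [Field F] [Finite F] {k : ℕ} (hk : k ≠ 0) :
    {a : F | (a ^ k) ^ (k + 1) = a ^ k}.ncard = 1 + (Nat.card F - 1).gcd (k * k) := by
  have hkk : k * k ≠ 0 := mul_ne_zero hk hk
  have hset : {a : F | (a ^ k) ^ (k + 1) = a ^ k} = insert 0 {a : F | a ^ (k * k) = 1} := by
    ext a
    simp [pow_pow_succ_eq_self_iff]
  rw [hset, Set.ncard_insert_of_notMem (by simp [hkk]), ncard_setOf_pow_eq_one hkk, add_comm]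

theorem one_lt_of_card_eq_sq {α : Type*} [Fintype α] [Nontrivial α] {q : ℕ}
    (h : Fintype.card α = q ^ 2) : 1 < q :=
  (Nat.one_lt_pow_iff two_ne_zero).1 (h ▸ Fintype.one_lt_card)

theorem Set.ncard_prod_setOf_eq_sum {α β : Type*} [Fintype α] [Finite β] (P : α → β → Prop) :
    {x : α × β | P x.1 x.2}.ncard = ∑ a, {b | P a b}.ncard := by
  classical
  have := Fintype.ofFinite β
  simp only [Set.ncard_eq_toFinset_card', Set.toFinset_ofPred, Finset.card_filter,
    Fintype.sum_prod_type]

section QTrace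

variable (F : Type*) [Field F] (p n : ℕ) [ExpChar F p]

/-- `b ↦ b ^ q + b` with `q = p ^ n`: the trace of `𝔽_{q²}/𝔽_q` when `F = 𝔽_{q²}`. -/
def qTrace : F →+ F := (iterateFrobenius F p n : F →+ F) + AddMonoidHom.id F

variable {F p n}

@[simp]
theorem qTrace_apply (b : F) : qTrace F p n b = b ^ p ^ n + b := rfl

variable [Fintype F]

theorem qTrace_pow (hF : Fintype.card F = (p ^ n) ^ 2) (b : F) :
    qTrace F p n b ^ p ^ n = qTrace F p n b := by
  rw [qTrace_apply, add_pow_expChar_pow, ← pow_mul, ← sq, ← hF, FiniteField.pow_card, add_comm]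

theorem card_ker_qTrace_and_card_range_qTrace (hF : Fintype.card F = (p ^ n) ^ 2) :
    Nat.card (qTrace F p n).ker = p ^ n ∧ Nat.card (qTrace F p n).range = p ^ n := by
  have hq := one_lt_of_card_eq_sq hF
  have hker : Nat.card (qTrace F p n).ker ≤ p ^ n := by
    refine (Nat.card_coe_set_eq ((qTrace F p n).ker : Set F)).trans_le
      ((Set.ncard_le_ncard ?_ (Set.toFinite _)).trans (ncard_setOf_pow_eq_mul_le hq (-1)))
    intro b hb
    simpa [eq_neg_iff_add_eq_zero] using hb
  have hrange : Nat.card (qTrace F p n).range ≤ p ^ n := by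
    refine (Nat.card_coe_set_eq ((qTrace F p n).range : Set F)).trans_le
      ((Set.ncard_le_ncard ?_ (Set.toFinite _)).trans (ncard_setOf_pow_eq_mul_le hq 1))
    rintro _ ⟨b, rfl⟩
    simpa using qTrace_pow hF b
  have hmul := (qTrace F p n).ker.card_mul_index
  rw [AddSubgroup.index_ker, Nat.card_eq_fintype_card (α := F), hF] at hmul
  constructor <;> nlinarith

theorem mem_range_qTrace_iff (hF : Fintype.card F = (p ^ n) ^ 2) (c : F) :
    c ∈ (qTrace F p n).range ↔ c ^ p ^ n = c := by
  refine ⟨fun ⟨b, hb⟩ ↦ hb ▸ qTrace_pow hF b, fun hc ↦ ?_⟩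
  have hsub : ((qTrace F p n).range : Set F) ⊆ {x | x ^ p ^ n = 1 * x} := by
    rintro _ ⟨b, rfl⟩
    simpa using qTrace_pow hF b
  have heq : ((qTrace F p n).range : Set F) = {x | x ^ p ^ n = 1 * x} := by
    refine Set.eq_of_subset_of_ncard_le hsub ?_
    rw [← Nat.card_coe_set_eq ((qTrace F p n).range : Set F), SetLike.coe_sort_coe,
      (card_ker_qTrace_and_card_range_qTrace hF).2]
    exact ncard_setOf_pow_eq_mul_le (one_lt_of_card_eq_sq hF) 1
  change c ∈ ((qTrace F p n).range : Set F)
  rw [heq]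
  simpa using hc

theorem ncard_qTrace_preimage [DecidableEq F] (hF : Fintype.card F = (p ^ n) ^ 2) (c : F) :
    (qTrace F p n ⁻¹' {c}).ncard = if c ^ p ^ n = c then p ^ n else 0 := by
  split_ifs with hc
  · obtain ⟨b, rfl⟩ := (mem_range_qTrace_iff hF c).2 hc
    rw [← Nat.card_coe_set_eq, Nat.card_congr (AddMonoidHom.fiberEquivKer _ b),
      (card_ker_qTrace_and_card_range_qTrace hF).1]
  · rw [Set.ncard_eq_zero, Set.eq_empty_iff_forall_notMem]
    rintro b rfl
    exact hc (qTrace_pow hF b)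

end QTrace

theorem affine_point_count_general (p n q : ℕ) [Fact p.Prime] (hq : q = p ^ n)
    (F : Type*) [Field F] [Fintype F] (hF : Fintype.card F = q ^ 2) :
    {ab : F × F | ab.2 ^ q + ab.2 = ab.1 ^ (q - 1)}.ncard
      = q * (1 + (q - 1) * Nat.gcd (q - 1) (q + 1)) := by
  classical
  subst hq
  have : CharP F p := charP_of_card_eq_prime_pow (hF.trans (pow_mul p n 2).symm)
  obtain ⟨k, hk⟩ : ∃ k, p ^ n = k + 1 :=
    Nat.exists_eq_add_one.2 (pow_pos (Fact.out : p.Prime).pos n)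
  have hk0 : k ≠ 0 := by
    have := one_lt_of_card_eq_sq hF
    omega
  rw [hk, Nat.add_sub_cancel]
  calc _ = ∑ a : F, (qTrace F p n ⁻¹' {a ^ k}).ncard := by
        rw [Set.ncard_prod_setOf_eq_sum fun a b ↦ b ^ (k + 1) + b = a ^ k]
        simp only [Set.preimage, qTrace_apply, hk, Set.mem_singleton_iff]
    _ = ∑ a : F, if (a ^ k) ^ (k + 1) = a ^ k then k + 1 else 0 := by
        simp only [ncard_qTrace_preimage hF, hk]
    _ = (k + 1) * {a : F | (a ^ k) ^ (k + 1) = a ^ k}.ncard := by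
        rw [Finset.sum_ite, Finset.sum_const_zero, add_zero, Finset.sum_const, smul_eq_mul,
          mul_comm, Set.ncard_eq_toFinset_card', Set.toFinset_ofPred]
    _ = (k + 1) * (1 + k * Nat.gcd k (k + 1 + 1)) := by
        rw [ncard_setOf_pow_pow_succ_eq_self hk0, Nat.card_eq_fintype_card, hF, hk,
          Nat.sub_eq_of_eq_add (by ring : (k + 1) ^ 2 = k * (k + 1 + 1) + 1), Nat.gcd_mul_left,
          Nat.gcd_comm]

/-- Let p be prime, q = pⁿ ≥ 3, and F the finite field with q² elements. The number
of pairs (a, b) ∈ F × F with b^q + b = a^(q-1) equals q(1 + (q-1)·gcd(q-1, q+1)). -/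
theorem affine_point_count (p n q : ℕ) [Fact p.Prime] (hq : q = p ^ n) (h3 : 3 ≤ q)
    (F : Type*) [Field F] [Fintype F] (hF : Fintype.card F = q ^ 2) :
    {ab : F × F | ab.2 ^ q + ab.2 = ab.1 ^ (q - 1)}.ncard
      = q * (1 + (q - 1) * Nat.gcd (q - 1) (q + 1)) :=
  affine_point_count_general p n q hq F hF
end

section
/- Let p be a prime, q = p^n \geq 3 a power of p, \mathbb{F}_{q^2} the field with q^2 elements, and S = \{ (a,b) \in \mathbb{F}_{q^2} \times \mathbb{F}_{q^2} : b^q + b = a^{q-1} \}. Let r be a natural number and let f \in \mathbb{F}_{q^2}[X, Y] be a nonzero polynomial such that every monomial X^i Y^j occurring in f satisfies 0 \leq j \leq q-1 and i\,q + j\,(q-1) \leq r. Then the number of points (a, b) \in S with f(a, b) = 0 is at most r. -/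
/-!
Give `x` pole order `q` and `y` pole order `q - 1`, and let `L(N)` be the span of the
monomials `x ^ i * y ^ j` with `j < q` and pole order at most `N`. Distinct such monomials have
distinct pole orders, so `dim L(r + K) - dim L(K) ≤ r`. Reducing a polynomial modulo
`y ^ q + y - x ^ (q - 1)` keeps its values on the curve and does not raise its pole order, and
leading pole orders add under multiplication. Hence, if `Z` is the set of zeros of `f` on the
curve, `g ↦ f * g` (reduced) embeds `L(K)` into the kernel of evaluation `L(r + K) → F ^ Z`, and
this evaluation is onto as soon as `K` bounds the pole orders of the indicator polynomials of
points. So `#Z ≤ r`.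
-/

open MvPolynomial
open Finsupp (weight)

section Weight

variable {σ R : Type*} [CommSemiring R]

lemma weight_finTwo_apply (a b : ℕ) (m : Fin 2 →₀ ℕ) :
    weight ![a, b] m = m 0 * a + m 1 * b := by
  simp [Finsupp.weight_apply, Finsupp.sum_fintype, Fin.sum_univ_two]

lemma mul_mem_restrictSupport_weight_le (w : σ → ℕ) {a b : ℕ} {p p' : MvPolynomial σ R}
    (hp : p ∈ restrictSupport R {m : σ →₀ ℕ | weight w m ≤ a})
    (hp' : p' ∈ restrictSupport R {m : σ →₀ ℕ | weight w m ≤ b}) :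
    p * p' ∈ restrictSupport R {m : σ →₀ ℕ | weight w m ≤ a + b} := by
  refine restrictSupport_mono R ?_ (restrictSupport_add R _ _ ▸ Submodule.mul_mem_mul hp hp')
  rintro _ ⟨m, hm, m', hm', rfl⟩
  simp only [Set.mem_ofPred_eq, map_add] at hm hm' ⊢
  omega

def IsLeadingExp (w : σ → ℕ) (p : MvPolynomial σ R) (m : σ →₀ ℕ) : Prop :=
  m ∈ p.support ∧ ∀ m' ∈ p.support, m' ≠ m → weight w m' < weight w m

lemma IsLeadingExp.mul [NoZeroDivisors R] {w : σ → ℕ} {p p' : MvPolynomial σ R}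
    {m m' : σ →₀ ℕ} (h : IsLeadingExp w p m) (h' : IsLeadingExp w p' m') :
    IsLeadingExp w (p * p') (m + m') := by
  classical
  have hle : ∀ a ∈ p.support, weight w a ≤ weight w m := fun a ha =>
    if hne : a = m then hne ▸ le_rfl else (h.2 a ha hne).le
  have hle' : ∀ a ∈ p'.support, weight w a ≤ weight w m' := fun a ha =>
    if hne : a = m' then hne ▸ le_rfl else (h'.2 a ha hne).le
  have htop : ∀ a ∈ p.support, ∀ a' ∈ p'.support,
      weight w m + weight w m' ≤ weight w a + weight w a' → a = m ∧ a' = m' := by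
    intro a ha a' ha' hw
    by_contra hne
    rcases not_and_or.mp hne with hne | hne
    · linarith [h.2 a ha hne, hle' a' ha']
    · linarith [h'.2 a' ha' hne, hle a ha]
  refine ⟨?_, fun k hk hne => ?_⟩
  · rw [mem_support_iff, coeff_mul, Finset.sum_eq_single (m, m')]
    · exact mul_ne_zero (mem_support_iff.mp h.1) (mem_support_iff.mp h'.1)
    · rintro ⟨a, a'⟩ hmem hne
      by_contra hc
      obtain ⟨ha, ha'⟩ := ne_zero_and_ne_zero_of_mul hc
      have hsum : a + a' = m + m' := Finset.HasAntidiagonal.mem_antidiagonal.mp hmem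
      obtain ⟨rfl, rfl⟩ := htop a (mem_support_iff.mpr ha) a' (mem_support_iff.mpr ha')
        (by rw [← map_add, ← map_add, hsum])
      exact hne rfl
    · simp
  · obtain ⟨a, ha, a', ha', rfl⟩ := Finset.mem_add.mp (support_mul p p' hk)
    rw [map_add, map_add]
    by_contra hlt
    obtain ⟨rfl, rfl⟩ := htop a ha a' ha' (not_lt.mp hlt)
    exact hne rfl

end Weight

section LinearAlgebra

variable {K V W : Type*} [Field K] [AddCommGroup V] [Module K V] [AddCommGroup W] [Module K W]

lemma finrank_map_add_finrank_le_of_le_ker (φ : V →ₗ[K] W) {A B : Submodule K V}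
    [FiniteDimensional K A] (hBA : B ≤ A) (hB : B ≤ LinearMap.ker φ) :
    Module.finrank K (A.map φ) + Module.finrank K B ≤ Module.finrank K A := by
  have hker : Module.finrank K B ≤ Module.finrank K (LinearMap.ker (φ.domRestrict A)) := by
    rw [LinearMap.ker_domRestrict, ← (Submodule.comapSubtypeEquivOfLe hBA).finrank_eq]
    exact Submodule.finrank_mono (Submodule.comap_mono hB)
  have := (φ.domRestrict A).finrank_range_add_finrank_ker
  rw [LinearMap.range_domRestrict] at this
  omega

end LinearAlgebra

section Evaluation

variable {σ R : Type*} [CommSemiring R]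

noncomputable def evalOn (Z : Set (σ → R)) : MvPolynomial σ R →ₗ[R] Z → R :=
  LinearMap.funLeft R R ((↑) : Z → σ → R) ∘ₗ evalₗ R σ

@[simp] lemma evalOn_apply (Z : Set (σ → R)) (p : MvPolynomial σ R) (x : Z) :
    evalOn Z p x = eval (x : σ → R) p := rfl

end Evaluation

namespace ArtinSchreierCurve

variable {R : Type*} [CommRing R] {q : ℕ}

lemma injOn_weight : Set.InjOn (weight ![q, q - 1]) {m : Fin 2 →₀ ℕ | m 1 < q} := by
  intro m hm m' hm' h
  simp only [Set.mem_ofPred_eq] at hm hm'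
  simp only [weight_finTwo_apply] at h
  -- the weight is `(m 0 + m 1) * q - m 1` with `0 ≤ m 1 < q`
  have key : ∀ n : Fin 2 →₀ ℕ, n 1 < q →
      (n 0 + n 1) * q = n 0 * q + n 1 * (q - 1) + n 1 := by
    intro n hn
    obtain ⟨s, rfl⟩ : ∃ s, q = s + 1 := ⟨q - 1, by omega⟩
    simp only [Nat.add_sub_cancel]
    ring
  have e := key m hm
  have e' := key m' hm'
  have hs : m 0 + m 1 = m' 0 + m' 1 := by
    have hstep : ∀ a b : ℕ, a < b → a * q + q ≤ b * q := fun a b hab => by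
      simpa [Nat.succ_mul] using Nat.mul_le_mul_right q hab
    rcases lt_trichotomy (m 0 + m 1) (m' 0 + m' 1) with hlt | heq | hgt
    · have := hstep _ _ hlt; omega
    · exact heq
    · have := hstep _ _ hgt; omega
  rw [hs] at e
  exact Finsupp.ext (Fin.forall_fin_two.mpr ⟨by omega, by omega⟩)

lemma weight_reduction_step (i k : ℕ) :
    (i + (q - 1)) * q + k * (q - 1) = i * q + (k + q) * (q - 1) := by
  cases q with
  | zero => simp
  | succ s => simp only [Nat.add_sub_cancel]; ring

variable (q) in
def reducedExps (N : ℕ) : Set (Fin 2 →₀ ℕ) := {m | m 1 < q ∧ weight ![q, q - 1] m ≤ N}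

lemma reducedExps_mono {N N' : ℕ} (h : N ≤ N') : reducedExps q N ⊆ reducedExps q N' :=
  fun _ hm => ⟨hm.1, hm.2.trans h⟩

lemma reducedExps_finite (N : ℕ) : (reducedExps q N).Finite := by
  refine (Set.finite_Iic (Finsupp.single 0 N + Finsupp.single 1 q)).subset fun m hm => ?_
  obtain ⟨h1, hN⟩ := hm
  rw [weight_finTwo_apply] at hN
  have : m 0 ≤ m 0 * q := Nat.le_mul_of_pos_right _ (by omega)
  simp only [Set.mem_Iic, Finsupp.le_def, Fin.forall_fin_two, Finsupp.coe_add, Pi.add_apply,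
    Finsupp.single_eq_same, Finsupp.single_eq_of_ne, ne_eq, zero_ne_one, one_ne_zero,
    not_false_eq_true, add_zero, zero_add]
  omega

lemma ncard_reducedExps_add_le (r K : ℕ) :
    (reducedExps q (r + K)).ncard ≤ (reducedExps q K).ncard + r := by
  have hdiff : (reducedExps q (r + K) \ reducedExps q K).ncard ≤ (Set.Ioc K (r + K)).ncard := by
    refine Set.ncard_le_ncard_of_injOn (weight ![q, q - 1]) ?_ ?_ (Set.finite_Ioc _ _)
    · rintro m ⟨⟨h1, hN⟩, hK⟩
      exact ⟨not_le.mp fun h => hK ⟨h1, h⟩, hN⟩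
    · exact injOn_weight.mono fun m hm => hm.1.1
  calc (reducedExps q (r + K)).ncard
      = (reducedExps q K ∪ (reducedExps q (r + K) \ reducedExps q K)).ncard := by
        rw [Set.union_sdiff_cancel (reducedExps_mono (Nat.le_add_left K r))]
    _ ≤ (reducedExps q K).ncard + (Set.Ioc K (r + K)).ncard :=
        (Set.ncard_union_le _ _).trans (Nat.add_le_add_left hdiff _)
    _ = (reducedExps q K).ncard + r := by simp

variable (R q) in
/-- Normal forms of the functions in `L(N P∞)`: `x` and `y` have pole orders `q` and `q - 1` at
`P∞`, and `y ^ q = x ^ (q - 1) - y` eliminates every power `y ^ j` with `j ≥ q`. -/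
noncomputable def riemannRoch (N : ℕ) : Submodule R (MvPolynomial (Fin 2) R) :=
  restrictSupport R (reducedExps q N)

instance (N : ℕ) : Module.Finite R (riemannRoch R q N) :=
  have := (reducedExps_finite (q := q) N).to_subtype
  .of_basis (basisRestrictSupport R _)

lemma finrank_riemannRoch [Nontrivial R] (N : ℕ) :
    Module.finrank R (riemannRoch R q N) = (reducedExps q N).ncard := by
  rw [riemannRoch, Module.finrank_eq_nat_card_basis (basisRestrictSupport R _),
    Nat.card_coe_set_eq]

lemma riemannRoch_mono {N N' : ℕ} (h : N ≤ N') : riemannRoch R q N ≤ riemannRoch R q N' :=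
  restrictSupport_mono R (reducedExps_mono h)

lemma riemannRoch_le_restrictSupport (N : ℕ) :
    riemannRoch R q N ≤ restrictSupport R {m | weight ![q, q - 1] m ≤ N} :=
  restrictSupport_mono R fun _ hm => hm.2

lemma coeff_eq_zero_of_mem_riemannRoch {N : ℕ} {p : MvPolynomial (Fin 2) R} {n : Fin 2 →₀ ℕ}
    (hp : p ∈ riemannRoch R q N) (hn : N < weight ![q, q - 1] n) : coeff n p = 0 :=
  notMem_support_iff.mp fun h => (hp h).2.not_gt hn

lemma exists_isLeadingExp {N : ℕ} {p : MvPolynomial (Fin 2) R} (hp : p ∈ riemannRoch R q N)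
    (hp0 : p ≠ 0) : ∃ m, IsLeadingExp ![q, q - 1] p m := by
  obtain ⟨m, hm, hmax⟩ := p.support.exists_max_image (weight ![q, q - 1])
    (Finset.nonempty_iff_ne_empty.mpr (support_eq_empty.not.mpr hp0))
  exact ⟨m, hm, fun m' hm' hne => (hmax m' hm').lt_of_ne
    fun h => hne (injOn_weight (hp hm').1 (hp hm).1 h)⟩

section Reduction

noncomputable def reduceMonomial (hq : 1 < q) (i j : ℕ) : MvPolynomial (Fin 2) R :=
  if j < q then monomial (Finsupp.single 0 i + Finsupp.single 1 j) 1
  else reduceMonomial hq (i + (q - 1)) (j - q) - reduceMonomial hq i (j - q + 1)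
termination_by j
decreasing_by all_goals omega

variable (hq : 1 < q)

lemma eval_reduceMonomial {x : Fin 2 → R} (hx : x 1 ^ q + x 1 = x 0 ^ (q - 1)) (i j : ℕ) :
    eval x (reduceMonomial hq i j) = x 0 ^ i * x 1 ^ j := by
  induction i, j using reduceMonomial.induct hq with
  | case1 i j hj =>
    rw [reduceMonomial, if_pos hj, eval_monomial, Finsupp.prod_fintype _ _ (by simp)]
    simp [Fin.prod_univ_two]
  | case2 i j hj ih₁ ih₂ =>
    rw [reduceMonomial, if_neg hj, map_sub, ih₁, ih₂, pow_add, ← hx]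
    obtain ⟨k, rfl⟩ : ∃ k, j = k + q := ⟨j - q, by omega⟩
    rw [Nat.add_sub_cancel]
    ring

lemma reduceMonomial_mem (i j : ℕ) :
    reduceMonomial hq i j ∈ riemannRoch R q (i * q + j * (q - 1)) := by
  induction i, j using reduceMonomial.induct hq with
  | case1 i j hj =>
    rw [reduceMonomial, if_pos hj, riemannRoch, monomial_mem_restrictSupport]
    left
    simp [reducedExps, weight_finTwo_apply, hj]
  | case2 i j hj ih₁ ih₂ =>
    rw [reduceMonomial, if_neg hj]
    obtain ⟨k, rfl⟩ : ∃ k, j = k + q := ⟨j - q, by omega⟩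
    rw [Nat.add_sub_cancel] at ih₁ ih₂ ⊢
    refine sub_mem (riemannRoch_mono (weight_reduction_step i k).le ih₁)
      (riemannRoch_mono ?_ ih₂)
    gcongr

lemma exists_coeff_reduceMonomial_eq_one (i j : ℕ) :
    ∃ n, weight ![q, q - 1] n = i * q + j * (q - 1) ∧
      coeff n (reduceMonomial (R := R) hq i j) = 1 := by
  induction i, j using reduceMonomial.induct hq with
  | case1 i j hj =>
    refine ⟨Finsupp.single 0 i + Finsupp.single 1 j, by simp [weight_finTwo_apply], ?_⟩
    rw [reduceMonomial, if_pos hj, coeff_monomial, if_pos rfl]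
  | case2 i j hj ih₁ _ =>
    obtain ⟨n, hn, hcoeff⟩ := ih₁
    obtain ⟨k, rfl⟩ : ∃ k, j = k + q := ⟨j - q, by omega⟩
    rw [Nat.add_sub_cancel] at hn
    have hweight : weight ![q, q - 1] n = i * q + (k + q) * (q - 1) :=
      hn.trans (weight_reduction_step i k)
    refine ⟨n, hweight, ?_⟩
    rw [reduceMonomial, if_neg hj, coeff_sub, hcoeff,
      coeff_eq_zero_of_mem_riemannRoch (reduceMonomial_mem hq i _), sub_zero]
    rw [hweight, Nat.add_sub_cancel]
    gcongr
    omega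

noncomputable def reduce : MvPolynomial (Fin 2) R →ₗ[R] MvPolynomial (Fin 2) R :=
  (basisMonomials (Fin 2) R).constr R fun m => reduceMonomial hq (m 0) (m 1)

lemma reduce_monomial (m : Fin 2 →₀ ℕ) (c : R) :
    reduce hq (monomial m c) = c • reduceMonomial hq (m 0) (m 1) := by
  have : monomial m c = c • basisMonomials (Fin 2) R m := by
    rw [coe_basisMonomials, smul_monomial, smul_eq_mul, mul_one]
  rw [this, map_smul, reduce, Module.Basis.constr_basis]

lemma reduce_eq_sum (p : MvPolynomial (Fin 2) R) :
    reduce hq p = ∑ m ∈ p.support, coeff m p • reduceMonomial hq (m 0) (m 1) := by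
  conv_lhs => rw [← support_sum_monomial_coeff p]
  simp only [map_sum, reduce_monomial]

lemma eval_reduce {x : Fin 2 → R} (hx : x 1 ^ q + x 1 = x 0 ^ (q - 1))
    (p : MvPolynomial (Fin 2) R) :
    eval x (reduce hq p) = eval x p := by
  induction p using MvPolynomial.induction_on' with
  | monomial m c =>
    rw [reduce_monomial, smul_eval, eval_reduceMonomial hq hx, eval_monomial,
      Finsupp.prod_fintype _ _ (by simp), Fin.prod_univ_two]
  | add p p' hp hp' => rw [map_add, map_add, map_add, hp, hp']

lemma map_reduce_le (N : ℕ) :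
    (restrictSupport R {m | weight ![q, q - 1] m ≤ N}).map (reduce hq) ≤ riemannRoch R q N := by
  rw [restrictSupport_eq_span, Submodule.map_span_le]
  rintro _ ⟨m, hm, rfl⟩
  rw [reduce_monomial, one_smul]
  exact riemannRoch_mono (by rwa [← weight_finTwo_apply]) (reduceMonomial_mem hq _ _)

lemma reduce_ne_zero {p : MvPolynomial (Fin 2) R} {m : Fin 2 →₀ ℕ}
    (hm : IsLeadingExp ![q, q - 1] p m) : reduce hq p ≠ 0 := by
  obtain ⟨n, hn, hcoeff⟩ := exists_coeff_reduceMonomial_eq_one (R := R) hq (m 0) (m 1)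
  rw [← weight_finTwo_apply] at hn
  have : coeff n (reduce hq p) = coeff m p := by
    rw [reduce_eq_sum, coeff_sum, Finset.sum_eq_single m]
    · rw [coeff_smul, hcoeff, smul_eq_mul, mul_one]
    · intro m' hm' hne
      rw [coeff_smul, coeff_eq_zero_of_mem_riemannRoch (reduceMonomial_mem hq _ _), smul_zero]
      rw [hn, ← weight_finTwo_apply]
      exact hm.2 m' hm' hne
    · exact fun h => absurd hm.1 h
  intro h0
  rw [h0, coeff_zero] at this
  exact mem_support_iff.mp hm.1 this.symm

lemma reduce_mul_ne_zero [NoZeroDivisors R] {a b : ℕ} {f g : MvPolynomial (Fin 2) R}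
    (hf : f ∈ riemannRoch R q a) (hf0 : f ≠ 0) (hg : g ∈ riemannRoch R q b) (hg0 : g ≠ 0) :
    reduce hq (f * g) ≠ 0 := by
  obtain ⟨m, hm⟩ := exists_isLeadingExp hf hf0
  obtain ⟨m', hm'⟩ := exists_isLeadingExp hg hg0
  exact reduce_ne_zero hq (hm.mul hm')

lemma evalOn_comp_reduce {Z : Set (Fin 2 → R)} (hZ : ∀ x ∈ Z, x 1 ^ q + x 1 = x 0 ^ (q - 1)) :
    evalOn Z ∘ₗ reduce hq = evalOn Z :=
  LinearMap.ext fun p => funext fun x => eval_reduce hq (hZ x x.2) p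

end Reduction

variable {F : Type*} [Field F] [Fintype F]

theorem map_evalOn_riemannRoch_eq_top (hq : 1 < q) {Z : Set (Fin 2 → F)}
    (hZ : ∀ x ∈ Z, x 1 ^ q + x 1 = x 0 ^ (q - 1)) {N : ℕ}
    (hN : (Fintype.card F - 1) * q + (Fintype.card F - 1) * (q - 1) ≤ N) :
    (riemannRoch F q N).map (evalOn Z) = ⊤ := by
  have hdeg : restrictDegree (Fin 2) F (Fintype.card F - 1) ≤
      restrictSupport F {m | weight ![q, q - 1] m ≤ N} := by
    refine restrictSupport_mono F fun m hm => ?_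
    have h0 := Nat.mul_le_mul_right q (hm 0)
    have h1 := Nat.mul_le_mul_right (q - 1) (hm 1)
    simp only [Set.mem_ofPred_eq, weight_finTwo_apply]
    omega
  refine top_unique ?_
  calc ⊤ = (⊤ : Submodule F ((Fin 2 → F) → F)).map
          (LinearMap.funLeft F F ((↑) : Z → Fin 2 → F)) := by
        rw [Submodule.map_top, LinearMap.range_eq_top.mpr
          (LinearMap.funLeft_surjective_of_injective _ _ _ Subtype.val_injective)]
    _ = ((restrictDegree (Fin 2) F (Fintype.card F - 1)).map (evalₗ F (Fin 2))).map
          (LinearMap.funLeft F F ((↑) : Z → Fin 2 → F)) := by rw [map_restrict_dom_evalₗ]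
    _ = (restrictDegree (Fin 2) F (Fintype.card F - 1)).map (evalOn Z ∘ₗ reduce hq) := by
        rw [evalOn_comp_reduce hq hZ, evalOn, Submodule.map_comp]
    _ ≤ (riemannRoch F q N).map (evalOn Z) := by
        rw [Submodule.map_comp]
        exact Submodule.map_mono ((Submodule.map_mono hdeg).trans (map_reduce_le hq N))

theorem ncard_zeros_le (hq : 1 < q) {r : ℕ} {f : MvPolynomial (Fin 2) F}
    (hf : f ∈ riemannRoch F q r) (hf0 : f ≠ 0) :
    {x : Fin 2 → F | x 1 ^ q + x 1 = x 0 ^ (q - 1) ∧ eval x f = 0}.ncard ≤ r := by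
  classical
  set Z := {x : Fin 2 → F | x 1 ^ q + x 1 = x 0 ^ (q - 1) ∧ eval x f = 0}
  set K := (Fintype.card F - 1) * q + (Fintype.card F - 1) * (q - 1)
  set μ := reduce hq ∘ₗ LinearMap.mulLeft F f
  have hU : (riemannRoch F q K).map μ ≤ riemannRoch F q (r + K) := by
    rintro _ ⟨g, hg, rfl⟩
    exact map_reduce_le hq (r + K) ⟨f * g, mul_mem_restrictSupport_weight_le _
      (riemannRoch_le_restrictSupport r hf) (riemannRoch_le_restrictSupport K hg), rfl⟩
  have hUker : (riemannRoch F q K).map μ ≤ LinearMap.ker (evalOn Z) := by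
    rintro _ ⟨g, -, rfl⟩
    refine LinearMap.mem_ker.mpr (funext fun x => ?_)
    rw [LinearMap.comp_apply, LinearMap.mulLeft_apply, evalOn_apply, eval_reduce hq x.2.1,
      map_mul, x.2.2, zero_mul, Pi.zero_apply]
  have hUrank : Module.finrank F ((riemannRoch F q K).map μ) =
      Module.finrank F (riemannRoch F q K) := by
    rw [← LinearMap.range_domRestrict]
    refine LinearMap.finrank_range_of_inj ((injective_iff_map_eq_zero _).mpr fun g hg => ?_)
    by_contra hg0
    exact reduce_mul_ne_zero hq hf hf0 g.2 (by simpa using hg0) hg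
  have key := finrank_map_add_finrank_le_of_le_ker (evalOn Z) hU hUker
  rw [map_evalOn_riemannRoch_eq_top hq (fun x hx => hx.1) (by omega), finrank_top,
    Module.finrank_fintype_fun_eq_card, hUrank, finrank_riemannRoch, finrank_riemannRoch,
    Fintype.card_eq_nat_card, Nat.card_coe_set_eq] at key
  have := ncard_reducedExps_add_le (q := q) r K
  omega

end ArtinSchreierCurve

theorem goppa_zero_bound_general (q : ℕ) (h3 : 3 ≤ q)
    (F : Type*) [Field F] [Fintype F]
    (r : ℕ) (f : MvPolynomial (Fin 2) F) (hf : f ≠ 0)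
    (hsupp : ∀ m ∈ f.support, m 1 ≤ q - 1 ∧ m 0 * q + m 1 * (q - 1) ≤ r) :
    {ab : F × F | ab.2 ^ q + ab.2 = ab.1 ^ (q - 1) ∧
      MvPolynomial.eval ![ab.1, ab.2] f = 0}.ncard ≤ r := by
  have hfL : f ∈ ArtinSchreierCurve.riemannRoch F q r := fun m hm => by
    obtain ⟨h1, hr⟩ := hsupp m hm
    exact ⟨by omega, by rwa [weight_finTwo_apply]⟩
  calc _ = {x : Fin 2 → F | x 1 ^ q + x 1 = x 0 ^ (q - 1) ∧ eval x f = 0}.ncard := by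
        rw [← Set.ncard_image_of_injective _ (finTwoArrowEquiv F).injective,
          Equiv.image_eq_preimage_symm]
        rfl
    _ ≤ r := ArtinSchreierCurve.ncard_zeros_le (by omega) hfL hf

/-- Let p be prime, q = pⁿ ≥ 3, F the field with q² elements, and
S = {(a,b) ∈ F × F : b^q + b = a^(q-1)}. If f ∈ F[X,Y] is a nonzero polynomial all
of whose monomials X^i Y^j satisfy j ≤ q-1 and i·q + j·(q-1) ≤ r, then f vanishes
at most r points of S. -/
theorem goppa_zero_bound (p n q : ℕ) [Fact p.Prime] (hq : q = p ^ n) (h3 : 3 ≤ q)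
    (F : Type*) [Field F] [Fintype F] (hF : Fintype.card F = q ^ 2)
    (r : ℕ) (f : MvPolynomial (Fin 2) F) (hf : f ≠ 0)
    (hsupp : ∀ m ∈ f.support, m 1 ≤ q - 1 ∧ m 0 * q + m 1 * (q - 1) ≤ r) :
    {ab : F × F | ab.2 ^ q + ab.2 = ab.1 ^ (q - 1) ∧
      MvPolynomial.eval ![ab.1, ab.2] f = 0}.ncard ≤ r :=
  goppa_zero_bound_general q h3 F r f hf hsupp
end

section
/- Let p be a prime, q = p^n \geq 3 a power of p, \mathbb{F}_{q^2} the field with q^2 elements, and S = \{ (a,b) \in \mathbb{F}_{q^2} \times \mathbb{F}_{q^2} : b^q + b = a^{q-1} \}. Let r be a natural number with r < \#S, and let C_r \subseteq \mathbb{F}_{q^2}^{S} be the \mathbb{F}_{q^2}-linear span of the evaluation vectors v_{i,j} ((v_{i,j})_{(a,b)} = a^i b^j) over all (i,j) \in \mathbb{N}^2 with 0 \leq j \leq q-1 and i\,q + j\,(q-1) \leq r. Then \dim_{\mathbb{F}_{q^2}} C_r = \#\{ (i,j) \in \mathbb{N}^2 : 0 \leq j \leq q-1, \; iq + j(q-1)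 \leq r \}. -/
/-!
Write a vanishing combination `∑ c_{ij} x^i y^j` of the evaluation vectors as a bivariate
polynomial `P = ∑_j g_j(x) y^j`. The map `b ↦ b^q + b` is additive; its kernel and its image
(which consists of fixed points of `b ↦ b^q`) both have at most `q` elements while their sizes
multiply to `q²`, so every nonempty fibre has exactly `q` elements. Hence `#S = q · #A`, where `A`
is the set of abscissae of points of `S`. For `a ∈ A`, the polynomial `P(a, y)` has degree `< q`
and `q` roots, so every `g_j` vanishes on `A`; and `q · deg g_j ≤ r < #S = q · #A` forces
`g_j = 0`.
-/

open Polynomial Finset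
open scoped Polynomial.Bivariate

namespace Polynomial

theorem evalEval_monomial_monomial {R : Type*} [CommSemiring R] (x y r : R) (i j : ℕ) :
    (monomial j (monomial i r)).evalEval x y = r * (x ^ i * y ^ j) := by
  rw [evalEval, eval_monomial, eval_mul, eval_monomial, eval_pow, eval_C, mul_assoc]

theorem eq_zero_of_evalEval_eq_zero {R : Type*} [CommRing R] [IsDomain R] {P : R[X][Y]}
    (A : Finset R) (B : R → Finset R)
    (hY : ∀ a ∈ A, P.natDegree < #(B a)) (hX : ∀ j, (P.coeff j).natDegree < #A)
    (hP : ∀ a ∈ A, ∀ b ∈ B a, P.evalEval a b = 0) : P = 0 := by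
  ext1 j
  rw [coeff_zero]
  refine eq_zero_of_natDegree_lt_card_of_eval_eq_zero' _ A (fun a ha => ?_) (hX j)
  have hPa : P.map (evalRingHom a) = 0 :=
    eq_zero_of_natDegree_lt_card_of_eval_eq_zero' _ (B a)
      (fun b hb => by rw [map_evalRingHom_eval]; exact hP a ha b hb)
      (natDegree_map_le.trans_lt (hY a ha))
  simpa using congrArg (coeff · j) hPa

theorem natCard_setOf_pow_eq_mul_le {R : Type*} [CommRing R] [IsDomain R] {q : ℕ} (hq : 1 < q)
    (a : R) : Nat.card {x : R | x ^ q = a * x} ≤ q := by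
  classical
  have hlt : (C a * X).natDegree < (X ^ q : R[X]).natDegree := by
    rw [natDegree_X_pow]
    exact (natDegree_le_of_degree_le (degree_C_mul_X_le a)).trans_lt hq
  have hdeg : (X ^ q - C a * X : R[X]).natDegree = q := by
    rw [natDegree_sub_eq_left_of_natDegree_lt hlt, natDegree_X_pow]
  have hne : (X ^ q - C a * X : R[X]) ≠ 0 := ne_zero_of_natDegree_gt (n := 0) (by omega)
  have hsub : {x : R | x ^ q = a * x} ⊆ (X ^ q - C a * X).roots.toFinset := fun x hx => by
    simpa [hne, sub_eq_zero] using hx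
  calc Nat.card {x : R | x ^ q = a * x}
      ≤ #(X ^ q - C a * X).roots.toFinset := by
        rw [Nat.card_coe_set_eq, ← Set.ncard_coe_finset]
        exact Set.ncard_le_ncard hsub (Finset.finite_toSet _)
    _ ≤ Multiset.card (X ^ q - C a * X).roots := Multiset.toFinset_card_le _
    _ ≤ (X ^ q - C a * X).natDegree := card_roots' _
    _ = q := hdeg

end Polynomial

theorem linearIndependent_monomial_eval {K : Type*} [Field K] (S : Set (K × K))
    (A : Finset K) (B : K → Finset K) (hAB : ∀ a ∈ A, ∀ b ∈ B a, (a, b) ∈ S)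
    (I : ℕ × ℕ → Prop) (hI : ∀ ij, I ij → ij.1 < #A ∧ ∀ a ∈ A, ij.2 < #(B a)) :
    LinearIndependent K
      (fun ij : {ij // I ij} => fun s : S => s.1.1 ^ ij.1.1 * s.1.2 ^ ij.1.2) := by
  classical
  rw [linearIndependent_iff']
  intro s c hc ij hij
  set P : K[X][Y] := ∑ kl ∈ s, monomial kl.1.2 (monomial kl.1.1 (c kl))
  have hcoeff : (P.coeff ij.1.2).coeff ij.1.1 = c ij := by
    simp only [P, finsetSum_coeff, coeff_monomial]
    rw [sum_eq_single ij]
    · simp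
    · intro kl _ hne
      have hne' : kl.1.2 ≠ ij.1.2 ∨ kl.1.1 ≠ ij.1.1 := by
        by_contra! h
        exact hne (Subtype.ext (Prod.ext h.2 h.1))
      rcases hne' with h | h
      · rw [if_neg h, coeff_zero]
      · split_ifs
        · rw [coeff_monomial, if_neg h]
        · rw [coeff_zero]
    · simp [hij]
  have hA : 0 < #A := (Nat.zero_le _).trans_lt (hI _ ij.2).1
  have hP : P = 0 := by
    refine eq_zero_of_evalEval_eq_zero A B (fun a ha => ?_) (fun j => ?_) (fun a ha b hb => ?_)
    · have hBa : 0 < #(B a) := (Nat.zero_le _).trans_lt ((hI _ ij.2).2 a ha)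
      refine Nat.lt_of_le_pred hBa (natDegree_sum_le_of_forall_le _ _ fun kl _ => ?_)
      exact (natDegree_monomial_le _).trans (Nat.le_pred_of_lt ((hI _ kl.2).2 a ha))
    · simp only [P, finsetSum_coeff, coeff_monomial]
      refine Nat.lt_of_le_pred hA (natDegree_sum_le_of_forall_le _ _ fun kl _ => ?_)
      split_ifs
      · exact (natDegree_monomial_le _).trans (Nat.le_pred_of_lt (hI _ kl.2).1)
      · simp
    · have hab := congrFun hc ⟨(a, b), hAB a ha b hb⟩
      simp only [Finset.sum_apply, Pi.smul_apply, smul_eq_mul, Pi.zero_apply] at hab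
      simpa [P, evalEval_finsetSum, evalEval_monomial_monomial] using hab
  rw [← hcoeff, hP, coeff_zero, coeff_zero]

theorem finrank_span_eq_natCard {K V ι : Type*} [DivisionRing K] [AddCommGroup V] [Module K V]
    {v : ι → V} (hv : LinearIndependent K v) :
    Module.finrank K (Submodule.span K (Set.range v)) = Nat.card ι := by
  rw [Module.finrank, rank_span hv, ← Nat.card_range_of_injective hv.injective]
  rfl

namespace AddMonoidHom

variable {G H : Type*} [AddGroup G] [Fintype G] [AddGroup H] [DecidableEq H]

theorem card_filter_eq_natCard_ker (f : G →+ H) {c : H} (hc : c ∈ f.range) :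
    #{b | f b = c} = Nat.card f.ker := by
  classical
  obtain ⟨b₀, rfl⟩ := hc
  rw [← Nat.card_congr (f.fiberEquivKer b₀), Nat.card_eq_card_toFinset]
  congr 1
  ext
  simp

theorem card_filter_apply_eq {α : Type*} [Fintype α] (f : G →+ H) (g : α → H) :
    #{x : α × G | f x.2 = g x.1} = #{a | g a ∈ f.range} * Nat.card f.ker := by
  rw [card_filter, ← univ_product_univ, sum_product]
  simp_rw [← card_filter]
  rw [← sum_filter_of_ne (p := fun a => g a ∈ f.range), card_eq_sum_ones, sum_mul, one_mul]
  · exact sum_congr rfl fun a ha => card_filter_eq_natCard_ker f (mem_filter.mp ha).2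
  · intro a _ ha
    obtain ⟨b, hb⟩ := card_ne_zero.mp ha
    exact ⟨b, (mem_filter.mp hb).2⟩

end AddMonoidHom

section FrobeniusTrace

variable (F : Type*) [Field F] (p n : ℕ) [ExpChar F p]

/-- When `#F = (p ^ n) ^ 2`, this is the trace of `F` over its subfield with `p ^ n` elements. -/
def frobeniusTrace : F →+ F :=
  (iterateFrobenius F p n).toAddMonoidHom + AddMonoidHom.id F

@[simp]
theorem frobeniusTrace_apply (b : F) : frobeniusTrace F p n b = b ^ p ^ n + b := rfl

variable {F p n} [Fintype F]

theorem natCard_ker_frobeniusTrace (hF : Fintype.card F = (p ^ n) ^ 2) :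
    Nat.card (frobeniusTrace F p n).ker = p ^ n := by
  have hq : 1 < p ^ n := by
    have := Fintype.one_lt_card (α := F)
    rw [hF] at this
    exact lt_of_pow_lt_pow_left₀ 2 (Nat.zero_le _) (by simpa using this)
  have hker : Nat.card (frobeniusTrace F p n).ker ≤ p ^ n := by
    refine le_trans (Nat.card_mono (Set.toFinite _) fun b hb => ?_)
      (natCard_setOf_pow_eq_mul_le hq (-1))
    simpa [add_eq_zero_iff_eq_neg] using hb
  have hrange : Nat.card (frobeniusTrace F p n).range ≤ p ^ n := by
    refine le_trans (Nat.card_mono (Set.toFinite _) ?_) (natCard_setOf_pow_eq_mul_le hq 1)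
    rintro _ ⟨b, rfl⟩
    have hb : (b ^ p ^ n) ^ p ^ n = b := by
      rw [← pow_mul, ← sq, ← hF, FiniteField.pow_card]
    simp [add_pow_expChar_pow, hb, add_comm]
  have hmul := (frobeniusTrace F p n).ker.card_mul_index
  rw [AddSubgroup.index_ker, Nat.card_eq_fintype_card (α := F), hF] at hmul
  nlinarith

end FrobeniusTrace

theorem code_dimension_eq_T_general (p n q : ℕ) [Fact p.Prime]
    (hq : q = p ^ n)
    (F : Type*) [Field F] [Fintype F] (hF : Fintype.card F = q ^ 2)
    (r : ℕ) (hr : r < {ab : F × F | ab.2 ^ q + ab.2 = ab.1 ^ (q - 1)}.ncard) :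
    Module.finrank F
      (Submodule.span F (Set.range
        (fun ij : {ij : ℕ × ℕ // ij.2 ≤ q - 1 ∧ ij.1 * q + ij.2 * (q - 1) ≤ r} =>
          (fun s : {ab : F × F | ab.2 ^ q + ab.2 = ab.1 ^ (q - 1)} =>
            s.1.1 ^ ij.1.1 * s.1.2 ^ ij.1.2 : _ → F))))
      = {ij : ℕ × ℕ | ij.2 ≤ q - 1 ∧ ij.1 * q + ij.2 * (q - 1) ≤ r}.ncard := by
  classical
  subst hq
  have : CharP F p := charP_of_card_eq_prime_pow (hF.trans (pow_mul p n 2).symm)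
  set tr := frobeniusTrace F p n
  set A : Finset F := {a | a ^ (p ^ n - 1) ∈ tr.range}
  set B : F → Finset F := fun a => {b | tr b = a ^ (p ^ n - 1)}
  have hB : ∀ a ∈ A, #(B a) = p ^ n := fun a ha =>
    (tr.card_filter_eq_natCard_ker (mem_filter.mp ha).2).trans (natCard_ker_frobeniusTrace hF)
  have hS : r < #A * p ^ n := by
    rw [← natCard_ker_frobeniusTrace hF, ← tr.card_filter_apply_eq]
    rwa [Set.ncard_eq_toFinset_card', Set.toFinset_ofPred] at hr
  have hq_pos : 0 < p ^ n := pow_pos (Fact.out : p.Prime).pos n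
  rw [finrank_span_eq_natCard (linearIndependent_monomial_eval _ A B ?_ _ ?_)]
  · exact Nat.card_coe_set_eq _
  · intro a _ b hb
    exact (mem_filter.mp hb).2
  · rintro ⟨i, j⟩ ⟨hj, hij⟩
    refine ⟨Nat.lt_of_mul_lt_mul_right (a := p ^ n) (by nlinarith), fun a ha => ?_⟩
    rw [hB a ha]
    omega

/-- Let p be prime, q = pⁿ ≥ 3, F the field with q² elements, and
S = {(a,b) ∈ F × F : b^q + b = a^(q-1)}. For r < #S, the span C_r of the evaluation
vectors v_{i,j} ((v_{i,j})_{(a,b)} = aⁱbʲ) over pairs (i,j) with j ≤ q-1 and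
i·q + j·(q-1) ≤ r has dimension #{(i,j) : j ≤ q-1, i·q + j·(q-1) ≤ r}. -/
theorem code_dimension_eq_T (p n q : ℕ) [Fact p.Prime]
    (hq : q = p ^ n) (h3 : 3 ≤ q)
    (F : Type*) [Field F] [Fintype F] (hF : Fintype.card F = q ^ 2)
    (r : ℕ) (hr : r < {ab : F × F | ab.2 ^ q + ab.2 = ab.1 ^ (q - 1)}.ncard) :
    Module.finrank F
      (Submodule.span F (Set.range
        (fun ij : {ij : ℕ × ℕ // ij.2 ≤ q - 1 ∧ ij.1 * q + ij.2 * (q - 1) ≤ r} =>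
          (fun s : {ab : F × F | ab.2 ^ q + ab.2 = ab.1 ^ (q - 1)} =>
            s.1.1 ^ ij.1.1 * s.1.2 ^ ij.1.2 : _ → F))))
      = {ij : ℕ × ℕ | ij.2 ≤ q - 1 ∧ ij.1 * q + ij.2 * (q - 1) ≤ r}.ncard :=
  code_dimension_eq_T_general p n q hq F hF r hr
end

section
/- Let p be a prime, q = p^n \geq 3 a power of p, \mathbb{F}_{q^2} the field with q^2 elements, and S = \{ (a,b) \in \mathbb{F}_{q^2} \times \mathbb{F}_{q^2} : b^q + b = a^{q-1} \}. Let r be an integer with r \geq q^3 + q^2 - 3q + 1, and let C_r \subseteq \mathbb{F}_{q^2}^{S} be the \mathbb{F}_{q^2}-linear span of the evaluation vectors v_{i,j} ((v_{i,j})_{(a,b)} = a^i b^j) over all (i,j) \in \mathbb{N}^2 with 0 \leq j \leq q-1 and i\,q + j\,(q-1) \leq r. Then C_r is the whole space \mathbb{F}_{q^2}^{S}; equivalently, \dim_{\mathbb{F}_{q^2}} C_r = \#S. -/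
/-!
Every function on the finite set `S` is a combination of point indicators, and the indicator of
`(a₀, b₀) ∈ S` is the product `P(a) Q(b)` of two Lagrange basis polynomials: `P` interpolates
`[a = a₀]` on all of `𝔽_{q²}` (degree `< q²`), and `Q` interpolates `[b = b₀]` on the fibre of `S`
over `a₀`, which consists of roots of `Y^q + Y - a₀^(q-1)` and so has at most `q` points
(degree `< q`). Expanding `P(a) Q(b)` gives only monomials `aⁱbʲ` with `i < q²`, `j < q`, whose
pole order `iq + j(q-1)` is at most `(q² - 1)q + (q - 1)² = q³ + q² - 3q + 1`.
-/

open Polynomial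

section Interpolation

variable {K : Type*} [Field K]

theorem exists_natDegree_lt_card_eval_eq_one_and_eq_zero (T : Finset K) {x : K} (hx : x ∈ T) :
    ∃ P : K[X], P.natDegree < T.card ∧ P.eval x = 1 ∧ ∀ y ∈ T, y ≠ x → P.eval y = 0 := by
  classical
  have hinj : Set.InjOn (id : K → K) T := Function.injective_id.injOn
  refine ⟨Lagrange.basis T id x, ?_, Lagrange.eval_basis_self hinj hx,
    fun y hy hyx => Lagrange.eval_basis_of_ne (v := id) (Ne.symm hyx) hy⟩
  rw [Lagrange.natDegree_basis hinj hx]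
  exact Nat.sub_lt (Finset.card_pos.2 ⟨x, hx⟩) one_pos

theorem natDegree_X_pow_add_X_sub_C {R : Type*} [CommRing R] [Nontrivial R] {q : ℕ} (hq : 1 < q)
    (c : R) : (X ^ q + X - C c : R[X]).natDegree = q := by
  rw [natDegree_sub_C, natDegree_add_eq_left_of_natDegree_lt] <;> simp [hq]

theorem exists_finset_card_le_forall_pow_add_self_eq_mem {q : ℕ} (hq : 1 < q)
    (c : K) : ∃ T : Finset K, T.card ≤ q ∧ ∀ b, b ^ q + b = c → b ∈ T := by
  classical
  set g : K[X] := X ^ q + X - C c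
  have hg : g.natDegree = q := natDegree_X_pow_add_X_sub_C hq c
  have hg0 : g ≠ 0 := ne_zero_of_natDegree_gt (hg ▸ (zero_lt_one.trans hq))
  refine ⟨g.roots.toFinset, ?_, fun b hb => ?_⟩
  · calc g.roots.toFinset.card ≤ Multiset.card g.roots := Multiset.toFinset_card_le _
      _ ≤ q := hg ▸ card_roots' g
  · simp [Multiset.mem_toFinset, mem_roots hg0, g, hb]

end Interpolation

section MonomialSpan

variable {K : Type*} [Field K] (S : Set (K × K))

def monomialEval (ij : ℕ × ℕ) : S → K := fun s => s.1.1 ^ ij.1 * s.1.2 ^ ij.2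

theorem eval_mul_eval_mem_span_monomialEval {N m : ℕ} {P Q : K[X]} (hP : P.natDegree < N)
    (hQ : Q.natDegree < m) :
    (fun s : S => P.eval s.1.1 * Q.eval s.1.2) ∈
      Submodule.span K (monomialEval S '' {ij | ij.1 < N ∧ ij.2 < m}) := by
  have hexpand : (fun s : S => P.eval s.1.1 * Q.eval s.1.2) =
      ∑ i ∈ Finset.range N, ∑ j ∈ Finset.range m,
        (P.coeff i * Q.coeff j) • monomialEval S (i, j) := by
    funext s
    simp only [Finset.sum_apply, Pi.smul_apply, smul_eq_mul, monomialEval]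
    rw [eval_eq_sum_range' hP, eval_eq_sum_range' hQ, Finset.sum_mul_sum]
    exact Finset.sum_congr rfl fun i _ => Finset.sum_congr rfl fun j _ => by ring
  rw [hexpand]
  refine Submodule.sum_mem _ fun i hi => Submodule.sum_mem _ fun j hj => ?_
  exact Submodule.smul_mem _ _ (Submodule.subset_span
    ⟨(i, j), ⟨Finset.mem_range.1 hi, Finset.mem_range.1 hj⟩, rfl⟩)

theorem span_monomialEval_eq_top_of_fiber_subset [Fintype K] {m : ℕ}
    (hfiber : ∀ a, ∃ T : Finset K, T.card ≤ m ∧ ∀ b, (a, b) ∈ S → b ∈ T) :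
    Submodule.span K (monomialEval S '' {ij | ij.1 < Fintype.card K ∧ ij.2 < m}) = ⊤ := by
  classical
  rw [eq_top_iff, ← (Pi.basisFun K S).span_eq, Submodule.span_le]
  rintro _ ⟨⟨⟨a₀, b₀⟩, hs₀⟩, rfl⟩
  obtain ⟨P, hPdeg, hPa₀, hP⟩ :=
    exists_natDegree_lt_card_eval_eq_one_and_eq_zero Finset.univ (Finset.mem_univ a₀)
  obtain ⟨T, hTcard, hT⟩ := hfiber a₀
  obtain ⟨Q, hQdeg, hQb₀, hQ⟩ := exists_natDegree_lt_card_eval_eq_one_and_eq_zero T (hT b₀ hs₀)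
  have hindicator : Pi.basisFun K S ⟨(a₀, b₀), hs₀⟩ =
      fun s : S => P.eval s.1.1 * Q.eval s.1.2 := by
    funext ⟨⟨a, b⟩, hs⟩
    rw [Pi.basisFun_apply]
    by_cases ha : a = a₀
    · subst ha
      by_cases hb : b = b₀
      · subst hb
        simp [hPa₀, hQb₀]
      · simp [hb, hPa₀, hQ b (hT b hs) hb]
    · simp [ha, hP a (Finset.mem_univ a) ha]
  rw [SetLike.mem_coe, hindicator]
  exact eval_mul_eval_mem_span_monomialEval S (by rwa [Finset.card_univ] at hPdeg)
    (hQdeg.trans_le hTcard)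

end MonomialSpan

theorem pole_order_le_of_lt {q i j : ℕ} (hq : 2 ≤ q) (hi : i < q ^ 2) (hj : j < q) :
    i * q + j * (q - 1) ≤ q ^ 3 + q ^ 2 - 3 * q + 1 := by
  have hbound : i * q + j * (q - 1) ≤ (q ^ 2 - 1) * q + (q - 1) * (q - 1) :=
    Nat.add_le_add (Nat.mul_le_mul_right _ (by omega)) (Nat.mul_le_mul_right _ (by omega))
  have h3q : 3 * q ≤ q ^ 3 + q ^ 2 := by nlinarith
  have hq2 : 1 ≤ q ^ 2 := Nat.one_le_pow _ _ (by omega)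
  have hexact : (q ^ 2 - 1) * q + (q - 1) * (q - 1) = q ^ 3 + q ^ 2 - 3 * q + 1 := by
    zify [hq2, h3q, show 1 ≤ q by omega]
    ring
  omega

theorem code_full_space_general (q : ℕ)
    (h3 : 3 ≤ q)
    (F : Type*) [Field F] [Fintype F] (hF : Fintype.card F = q ^ 2)
    (r : ℕ) (hr : q ^ 3 + q ^ 2 - 3 * q + 1 ≤ r) :
    Submodule.span F (Set.range
        (fun ij : {ij : ℕ × ℕ // ij.2 ≤ q - 1 ∧ ij.1 * q + ij.2 * (q - 1) ≤ r} =>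
          (fun s : {ab : F × F | ab.2 ^ q + ab.2 = ab.1 ^ (q - 1)} =>
            s.1.1 ^ ij.1.1 * s.1.2 ^ ij.1.2 : _ → F))) = ⊤ := by
  set S := {ab : F × F | ab.2 ^ q + ab.2 = ab.1 ^ (q - 1)}
  have hfiber : ∀ a, ∃ T : Finset F, T.card ≤ q ∧ ∀ b, (a, b) ∈ S → b ∈ T := fun a =>
    exists_finset_card_le_forall_pow_add_self_eq_mem (by omega) (a ^ (q - 1))
  rw [eq_top_iff, ← span_monomialEval_eq_top_of_fiber_subset S hfiber, hF]
  refine Submodule.span_mono ?_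
  rintro _ ⟨⟨i, j⟩, ⟨hi, hj⟩, rfl⟩
  exact ⟨⟨(i, j), by omega, (pole_order_le_of_lt (by omega) hi hj).trans hr⟩, rfl⟩

/-- Let p be prime, q = pⁿ ≥ 3, F the field with q² elements, and
S = {(a,b) ∈ F × F : b^q + b = a^(q-1)}. For r ≥ q³ + q² - 3q + 1, the span C_r of
the evaluation vectors v_{i,j} ((v_{i,j})_{(a,b)} = aⁱbʲ) over pairs (i,j) with
j ≤ q-1 and i·q + j·(q-1) ≤ r is the whole space F^S. -/
theorem code_full_space (p n q : ℕ) [Fact p.Prime]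
    (hq : q = p ^ n) (h3 : 3 ≤ q)
    (F : Type*) [Field F] [Fintype F] (hF : Fintype.card F = q ^ 2)
    (r : ℕ) (hr : q ^ 3 + q ^ 2 - 3 * q + 1 ≤ r) :
    Submodule.span F (Set.range
        (fun ij : {ij : ℕ × ℕ // ij.2 ≤ q - 1 ∧ ij.1 * q + ij.2 * (q - 1) ≤ r} =>
          (fun s : {ab : F × F | ab.2 ^ q + ab.2 = ab.1 ^ (q - 1)} =>
            s.1.1 ^ ij.1.1 * s.1.2 ^ ij.1.2 : _ → F))) = ⊤ :=
  code_full_space_general q h3 F hF r hr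
end
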